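/- If |F| > 2 and n ≥ 2, the triameter of the unitary Cayley graph C_{T_n(F)} equals 6. -/

import Mathlib

open Matrix

/-- The subring of upper triangular `n × n` matrices over `F`. -/
def upperTri (F : Type) [Field F] (n : ℕ) : Subring (Matrix (Fin n) (Fin n) F) where
  carrier := {M | M.BlockTriangular id}
  zero_mem' := Matrix.blockTriangular_zero
  one_mem' := Matrix.blockTriangular_one
  add_mem' := fun ha hb => ha.add hb
  mul_mem' := fun ha hb => ha.mul hb
  neg_mem' := fun ha => ha.neg

/-- The unitary Cayley graph of the ring `T_n(F)`. -/
def cayley (F : Type) [Field F] (n : ℕ) : SimpleGraph (upperTri F n) where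
  Adj x y := x ≠ y ∧ IsUnit (x - y)
  symm := by
    constructor
    intro x y ⟨hne, hu⟩
    exact ⟨hne.symm, by simpa using hu.neg⟩
  loopless := ⟨fun x h => h.1 rfl⟩

/-!
An element of `T_n(F)` is a unit exactly when no diagonal entry vanishes, so `x ~ y` iff the
diagonals of `x` and `y` differ in every position. As `|F| ≥ 3`, any two vertices have a common
neighbour, namely a diagonal matrix whose diagonal avoids both of theirs; hence all distances are at
most `2`. For `n ≥ 2` the matrices `0`, `E₀₀`, `E₀₁` are distinct and agree at position `(1, 1)`, so
they are pairwise at distance exactly `2`.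
-/

open SimpleGraph

variable {F : Type} [Field F] {n : ℕ}

theorem upperTri.isUnit_iff_forall_diag_ne_zero (M : upperTri F n) :
    IsUnit M ↔ ∀ i, (M : Matrix (Fin n) (Fin n) F) i i ≠ 0 := by
  have hdet : (M : Matrix (Fin n) (Fin n) F).det = ∏ i, (M : Matrix (Fin n) (Fin n) F) i i :=
    det_of_isUpperTriangular M.2
  have hcoe : IsUnit M ↔ IsUnit (M : Matrix (Fin n) (Fin n) F) := by
    refine ⟨(·.map (upperTri F n).subtype), fun hM => ?_⟩
    have hdetM := (isUnit_iff_isUnit_det _).1 hM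
    let := hM.invertible
    have hinv : (M : Matrix (Fin n) (Fin n) F)⁻¹ ∈ upperTri F n :=
      blockTriangular_inv_of_blockTriangular M.2
    exact ⟨⟨M, ⟨_, hinv⟩, Subtype.ext (mul_nonsing_inv _ hdetM),
      Subtype.ext (nonsing_inv_mul _ hdetM)⟩, rfl⟩
  rw [hcoe, isUnit_iff_isUnit_det, hdet, isUnit_iff_ne_zero, Finset.prod_ne_zero_iff]
  simp only [Finset.mem_univ, forall_const]

theorem cayley_adj_iff {x y : upperTri F n} :
    (cayley F n).Adj x y ↔
      x ≠ y ∧ ∀ i, (x : Matrix (Fin n) (Fin n) F) i i ≠ (y : Matrix (Fin n) (Fin n) F) i i := by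
  simp only [cayley, upperTri.isUnit_iff_forall_diag_ne_zero, AddSubgroupClass.coe_sub,
    Matrix.sub_apply, sub_ne_zero]

theorem cayley_not_adj_of_diag_eq {x y : upperTri F n} (i : Fin n)
    (h : (x : Matrix (Fin n) (Fin n) F) i i = (y : Matrix (Fin n) (Fin n) F) i i) :
    ¬(cayley F n).Adj x y :=
  fun hxy => (cayley_adj_iff.1 hxy).2 i h

theorem cayley_adj_of_forall_diag_ne [NeZero n] {x y : upperTri F n}
    (h : ∀ i, (x : Matrix (Fin n) (Fin n) F) i i ≠ (y : Matrix (Fin n) (Fin n) F) i i) :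
    (cayley F n).Adj x y :=
  cayley_adj_iff.2 ⟨fun hxy => h 0 (by rw [hxy]), h⟩

theorem cayley_exists_adj_adj [Fintype F] [NeZero n] (hF : 2 < Fintype.card F)
    (x y : upperTri F n) : ∃ z, (cayley F n).Adj x z ∧ (cayley F n).Adj z y := by
  have hF' : 3 ≤ ENat.card F := by
    rw [ENat.card_eq_coe_fintype_card]; exact_mod_cast hF
  choose c hcx hcy using fun i : Fin n =>
    ENat.exists_ne_ne_of_three_le hF' ((x : Matrix (Fin n) (Fin n) F) i i)
      ((y : Matrix (Fin n) (Fin n) F) i i)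
  refine ⟨⟨diagonal c, blockTriangular_diagonal c⟩,
    cayley_adj_of_forall_diag_ne fun i => ?_, cayley_adj_of_forall_diag_ne fun i => ?_⟩
  · simpa using (hcx i).symm
  · simpa using hcy i

theorem cayley_dist_le_two [Fintype F] [NeZero n] (hF : 2 < Fintype.card F)
    (x y : upperTri F n) : (cayley F n).dist x y ≤ 2 := by
  obtain ⟨z, hxz, hzy⟩ := cayley_exists_adj_adj hF x y
  exact dist_le (.cons hxz (.cons hzy .nil))

theorem cayley_dist_eq_two [Fintype F] [NeZero n] (hF : 2 < Fintype.card F)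
    {x y : upperTri F n} (hne : x ≠ y) (hnadj : ¬(cayley F n).Adj x y) :
    (cayley F n).dist x y = 2 := by
  obtain ⟨z, hxz, hzy⟩ := cayley_exists_adj_adj hF x y
  have h0 : (cayley F n).dist x y ≠ 0 :=
    (Reachable.dist_eq_zero_iff ⟨.cons hxz (.cons hzy .nil)⟩).not.2 hne
  have h1 : (cayley F n).dist x y ≠ 1 := dist_eq_one_iff_adj.not.2 hnadj
  have h2 := cayley_dist_le_two hF x y
  omega

theorem cayley_exists_three_pairwise_not_adj (hn : 2 ≤ n) :
    ∃ u v w : upperTri F n, u ≠ v ∧ u ≠ w ∧ v ≠ w ∧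
      ¬(cayley F n).Adj u v ∧ ¬(cayley F n).Adj u w ∧ ¬(cayley F n).Adj v w := by
  let i₀ : Fin n := ⟨0, by omega⟩
  let i₁ : Fin n := ⟨1, by omega⟩
  have h01 : i₀ ≠ i₁ := by simp [i₀, i₁, Fin.ext_iff]
  let v : upperTri F n := ⟨single i₀ i₀ 1, blockTriangular_single le_rfl 1⟩
  let w : upperTri F n := ⟨single i₀ i₁ 1, blockTriangular_single (by simp [i₀, i₁]) 1⟩
  refine ⟨0, v, w, fun h => ?_, fun h => ?_, fun h => ?_,
    cayley_not_adj_of_diag_eq i₁ ?_, cayley_not_adj_of_diag_eq i₁ ?_,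
    cayley_not_adj_of_diag_eq i₁ ?_⟩
  · simpa [v] using congrArg (fun M : upperTri F n => (M : Matrix (Fin n) (Fin n) F) i₀ i₀) h
  · simpa [w] using congrArg (fun M : upperTri F n => (M : Matrix (Fin n) (Fin n) F) i₀ i₁) h
  · simpa [v, w, h01.symm] using
      congrArg (fun M : upperTri F n => (M : Matrix (Fin n) (Fin n) F) i₀ i₀) h
  all_goals simp [v, w, h01]

/-- If `|F| > 2` and `n ≥ 2`, the triameter of `C_{T_n(F)}` equals `6`:
`6` is the greatest value of `d(u,v) + d(u,w) + d(v,w)` over triples of vertices. -/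
theorem stmt9 (F : Type) [Field F] [Fintype F] (n : ℕ) (hn : 2 ≤ n)
    (hF : 2 < Fintype.card F) :
    IsGreatest
      {d : ℕ | ∃ u v w : upperTri F n,
        d = (cayley F n).dist u v + (cayley F n).dist u w + (cayley F n).dist v w}
      6 := by
  have : NeZero n := ⟨by omega⟩
  obtain ⟨u, v, w, huv, huw, hvw, h_uv, h_uw, h_vw⟩ :=
    cayley_exists_three_pairwise_not_adj (F := F) hn
  refine ⟨⟨u, v, w, ?_⟩, ?_⟩
  · rw [cayley_dist_eq_two hF huv h_uv, cayley_dist_eq_two hF huw h_uw,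
      cayley_dist_eq_two hF hvw h_vw]
  · rintro d ⟨u, v, w, rfl⟩
    have := cayley_dist_le_two hF u v
    have := cayley_dist_le_two hF u w
    have := cayley_dist_le_two hF v w
    omega
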